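/- Let Y be a compact regular Hausdorff space and f : X → Y a function, and let Z = cl(gr(f)) ⊆ X × Y be the closure of the graph of f. Then f is globally multi-split continuous if and only if the projection π : X × Y → X restricted to Z is finite-to-one (i.e. every fiber of π|_Z is finite). -/

import Mathlib

/-!
The fibre of the closed graph over `p` is `{p} × C`, where `C` is the cluster set of `f` at `p`.
Any set of extended values at `p` equals `C`: condition (a) says it lies inside `C`, and
condition (b) says `f` tends to its neighbourhood filter, which in a regular space forces every
cluster point into its closure, i.e. into the (finite, hence closed) set itself. Conversely, in a
compact space `f` always tends to the neighbourhoods of `C`, and `C` is nonempty, so a finite `C`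
is a set of extended values.
-/

open Filter Topology Set

universe u v w

variable {X : Type u} {Y : Type v} [TopologicalSpace X] [TopologicalSpace Y]

/-- `Z` is a set of extended values of `f` at `p`. -/
def ExtendedValues (f : X → Y) (p : X) (Z : Set Y) : Prop :=
  Z.Finite ∧ Z.Nonempty ∧
    (∀ y ∈ Z, ∀ U ∈ 𝓝 p, ∀ V ∈ 𝓝 y, (f '' U ∩ V).Nonempty) ∧
    (∀ V ∈ 𝓝ˢ Z, ∃ U ∈ 𝓝 p, f '' U ⊆ V)

/-- `f` is multi-split continuous at `p`. -/
def MultiSplitAt (f : X → Y) (p : X) : Prop := ∃ Z : Set Y, ExtendedValues f p Z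

section Filters

variable {α β : Type*} {l : Filter α} {f : α → β}

lemma Filter.tendsto_iff_image_subset {l' : Filter β} :
    Tendsto f l l' ↔ ∀ V ∈ l', ∃ U ∈ l, f '' U ⊆ V :=
  l.basis_sets.tendsto_left_iff.trans <| by simp only [mapsTo_iff_image_subset, id]

lemma mapClusterPt_iff_image_inter_nonempty [TopologicalSpace β] {y : β} :
    MapClusterPt y l f ↔ ∀ U ∈ l, ∀ V ∈ 𝓝 y, (f '' U ∩ V).Nonempty := by
  simp only [mapClusterPt_iff_frequently, frequently_iff, image_inter_nonempty_iff]
  exact forall₂_comm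

lemma mem_closure_of_mapClusterPt_of_tendsto_nhdsSet [TopologicalSpace β] [RegularSpace β]
    {Z : Set β} {y : β} (hf : Tendsto f l (𝓝ˢ Z)) (hy : MapClusterPt y l f) : y ∈ closure Z := by
  by_contra hyZ
  exact clusterPt_iff_not_disjoint.1 hy ((disjoint_nhdsSet_nhds.2 hyZ).symm.mono_right hf)

end Filters

variable {f : X → Y} {p : X}

lemma mem_closure_graph_iff {y : Y} :
    (p, y) ∈ closure {q : X × Y | q.2 = f q.1} ↔ MapClusterPt y (𝓝 p) f := by
  rw [mem_closure_iff_nhds_basis ((𝓝 p).basis_sets.prod_nhds (𝓝 y).basis_sets),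
    mapClusterPt_iff_frequently]
  simp only [Prod.forall, mem_ofPred_eq, mem_prod, Prod.exists, exists_eq_left, and_imp, id,
    frequently_iff]
  exact ⟨fun h V hV U hU => h U V hU hV, fun h U V hU hV => h V hV hU⟩

lemma extendedValues_iff {Z : Set Y} :
    ExtendedValues f p Z ↔ Z.Finite ∧ Z.Nonempty ∧ (∀ y ∈ Z, MapClusterPt y (𝓝 p) f) ∧
      Tendsto f (𝓝 p) (𝓝ˢ Z) := by
  simp only [ExtendedValues, mapClusterPt_iff_image_inter_nonempty, tendsto_iff_image_subset]

lemma ExtendedValues.eq_setOf_mapClusterPt [T1Space Y] [RegularSpace Y] {Z : Set Y}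
    (h : ExtendedValues f p Z) : Z = {y | MapClusterPt y (𝓝 p) f} := by
  obtain ⟨hfin, -, hclus, htends⟩ := extendedValues_iff.1 h
  refine Subset.antisymm hclus fun y hy => ?_
  simpa only [hfin.isClosed.closure_eq] using
    mem_closure_of_mapClusterPt_of_tendsto_nhdsSet htends hy

lemma extendedValues_setOf_mapClusterPt [CompactSpace Y]
    (hfin : {y | MapClusterPt y (𝓝 p) f}.Finite) :
    ExtendedValues f p {y | MapClusterPt y (𝓝 p) f} :=
  extendedValues_iff.2 ⟨hfin, exists_clusterPt_of_compactSpace _, fun _ => id,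
    isCompact_univ.tendsto_nhdsSet_of_mapClusterPt (.of_forall fun _ => mem_univ _) fun _ _ => id⟩

theorem multiSplitAt_iff_finite_setOf_mapClusterPt [CompactSpace Y] [T3Space Y] :
    MultiSplitAt f p ↔ {y | MapClusterPt y (𝓝 p) f}.Finite :=
  ⟨fun ⟨_, hZ⟩ => hZ.eq_setOf_mapClusterPt ▸ hZ.1,
    fun h => ⟨_, extendedValues_setOf_mapClusterPt h⟩⟩

lemma sep_closure_graph_fst_eq (x : X) :
    {q ∈ closure {q : X × Y | q.2 = f q.1} | q.1 = x} =
      Prod.mk x '' {y | MapClusterPt y (𝓝 x) f} := by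
  ext ⟨x', y⟩
  simp only [mem_ofPred_eq, mem_closure_graph_iff, mem_image, Prod.mk.injEq]
  constructor
  · rintro ⟨h, rfl⟩
    exact ⟨y, h, rfl, rfl⟩
  · rintro ⟨_, h, rfl, rfl⟩
    exact ⟨h, rfl⟩

theorem stmt16 [CompactSpace Y] [T3Space Y] (f : X → Y) :
    (∀ p : X, MultiSplitAt f p) ↔
      ∀ x : X, {q ∈ closure {q : X × Y | q.2 = f q.1} | q.1 = x}.Finite :=
  forall_congr' fun x => by
    rw [multiSplitAt_iff_finite_setOf_mapClusterPt, sep_closure_graph_fst_eq,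
      finite_image_iff (Prod.mk_right_injective x).injOn]
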